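/- Let R be a ring. If there exist elements a, b ∈ R such that a² = 0, b² = 0, ab = ba, and ab is not central in R, then R is not a central linear Armendariz ring. -/

import Mathlib

open Polynomial

/-- A ring `R` is *central linear Armendariz* if whenever the product of two linear
polynomials `(a₀ + a₁x)(b₀ + b₁x) = 0` in `R[x]`, each product `aᵢbⱼ` is central in `R`. -/
def CentralLinearArmendariz (R : Type*) [Ring R] : Prop :=
  ∀ a₀ a₁ b₀ b₁ : R,
    (C a₀ + C a₁ * X) * (C b₀ + C b₁ * X) = 0 →
      a₀ * b₀ ∈ Set.center R ∧ a₀ * b₁ ∈ Set.center R ∧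
      a₁ * b₀ ∈ Set.center R ∧ a₁ * b₁ ∈ Set.center R

/-- A ring `R` is *linear Armendariz* if whenever the product of two linear
polynomials `(a₀ + a₁x)(b₀ + b₁x) = 0` in `R[x]`, each product `aᵢbⱼ` is zero. -/
def LinearArmendariz (R : Type*) [Ring R] : Prop :=
  ∀ a₀ a₁ b₀ b₁ : R,
    (C a₀ + C a₁ * X) * (C b₀ + C b₁ * X) = 0 →
      a₀ * b₀ = 0 ∧ a₀ * b₁ = 0 ∧ a₁ * b₀ = 0 ∧ a₁ * b₁ = 0

/-- A ring `R` is *Armendariz* if whenever `f g : R[x]` satisfy `f * g = 0`,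
every product of a coefficient of `f` with a coefficient of `g` is zero. -/
def Armendariz (R : Type*) [Ring R] : Prop :=
  ∀ f g : R[X], f * g = 0 → ∀ i j : ℕ, f.coeff i * g.coeff j = 0

section LinearProduct

variable {R : Type*} [Ring R]

theorem linear_mul_linear (a₀ a₁ b₀ b₁ : R) :
    (C a₀ + C a₁ * X) * (C b₀ + C b₁ * X) =
      C (a₀ * b₀) + C (a₀ * b₁ + a₁ * b₀) * X + C (a₁ * b₁) * X ^ 2 := by
  simp only [add_mul, mul_add, C_add, C_mul, mul_assoc, X_mul_C, sq]
  rw [← mul_assoc X, X_mul_C, mul_assoc]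
  abel

/-- The middle coefficient of `(a - bx)(a + bx)` is the commutator `ab - ba`. -/
theorem linear_mul_linear_eq_zero_of_sq_eq_zero {a b : R} (ha : a ^ 2 = 0) (hb : b ^ 2 = 0)
    (hab : a * b = b * a) : (C a + C (-b) * X) * (C a + C b * X) = 0 := by
  rw [linear_mul_linear, ← sq, neg_mul, neg_mul, ← sq, ha, hb, hab]
  simp

end LinearProduct

/-- If `a, b ∈ R` satisfy `a² = 0`, `b² = 0`, `ab = ba` and `ab` is not central,
then `R` is not central linear Armendariz. -/
theorem stmt_9 (R : Type*) [Ring R] (a b : R) (ha : a ^ 2 = 0) (hb : b ^ 2 = 0)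
    (hab : a * b = b * a) (hnc : a * b ∉ Set.center R) :
    ¬ CentralLinearArmendariz R :=
  fun h => hnc (h a (-b) a b (linear_mul_linear_eq_zero_of_sq_eq_zero ha hb hab)).2.1
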